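/- arXiv:1311.6608 — 2 statements merged into one kernel-verified Lean document; each statement's English description precedes it below -/
import Mathlib

section
/- Let M be the adjacency matrix of T_{p,q,r} and let B = M − 2·I be the Gram matrix of the lattice T_{p,q,r}^{(2)} (each vertex v has B(v,v) = −2 and adjacent vertices pair to 1). If 1/p + 1/q + 1/r < 1 then B is nondegenerate and has exactly one positive eigenvalue (it is Lorentzian/hyperbolic); if 1/p + 1/q + 1/r = 1 then B is negative semidefinite with one-dimensional kernel (it is affine); if 1/p + 1/q + 1/r > 1 then B is negative definite. -/
open scoped Matrix

/-- The vertex set of the tree `T_{p,q,r}`: a central vertex (`none`) together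
with three arms of `p-1`, `q-1` and `r-1` vertices. -/
abbrev TVertex (p q r : ℕ) : Type := Option (Fin (p - 1) ⊕ (Fin (q - 1) ⊕ Fin (r - 1)))

/-- Entry recording an edge between positions `i` and `j` of a path. -/
def pathEntry (i j : ℕ) : ℝ := if i + 1 = j ∨ j + 1 = i then 1 else 0

/-- Entry recording the edge from the central vertex to position `i` of an arm. -/
def tipEntry (i : ℕ) : ℝ := if i = 0 then 1 else 0

/-- The adjacency matrix of the tree `T_{p,q,r}`: a central vertex joined to one
end of each of three paths with `p-1`, `q-1`, and `r-1` vertices respectively. -/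
def adjT (p q r : ℕ) : Matrix (TVertex p q r) (TVertex p q r) ℝ :=
  fun v w =>
    match v, w with
    | none, none => 0
    | none, some (Sum.inl i) => tipEntry i
    | none, some (Sum.inr (Sum.inl i)) => tipEntry i
    | none, some (Sum.inr (Sum.inr i)) => tipEntry i
    | some (Sum.inl i), none => tipEntry i
    | some (Sum.inr (Sum.inl i)), none => tipEntry i
    | some (Sum.inr (Sum.inr i)), none => tipEntry i
    | some (Sum.inl i), some (Sum.inl j) => pathEntry i j
    | some (Sum.inr (Sum.inl i)), some (Sum.inr (Sum.inl j)) => pathEntry i j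
    | some (Sum.inr (Sum.inr i)), some (Sum.inr (Sum.inr j)) => pathEntry i j
    | _, _ => 0

/-- `μ(p,q,r)`, the largest eigenvalue of the adjacency matrix of `T_{p,q,r}`. -/
noncomputable def muT (p q r : ℕ) : ℝ :=
  sSup {μ : ℝ | ∃ x : TVertex p q r → ℝ, x ≠ 0 ∧ (adjT p q r).mulVec x = μ • x}

/-- The Gram matrix of the lattice `T_{p,q,r}^{(2)}`: each vertex has square
`-2` and adjacent vertices pair to `1`. -/
noncomputable def gramT (p q r : ℕ) : Matrix (TVertex p q r) (TVertex p q r) ℝ :=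
  adjT p q r - (2 : ℝ) • (1 : Matrix (TVertex p q r) (TVertex p q r) ℝ)

/-!
Let `t` be the coordinate of the central vertex. Completing squares along an arm with `m + 1`
vertices (so `p = m + 2`) shows that its share of `-x ⬝ B x` is at least `(1 - 1/p) t²`, with
equality exactly on the linear profile `(m + 1 - i) / (m + 2) · t`. Hence
`x ⬝ B x = (1 - (1/p + 1/q + 1/r)) t² - E x` with `E ≥ 0` vanishing only on multiples of one
vector `y`, normalised by `t = 1`. So `B` is negative definite on the hyperplane `t = 0`, which
leaves room for at most one nonnegative eigenvalue, and the sign of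
`y ⬝ B y = 1 - (1/p + 1/q + 1/r)` decides between the three cases.
-/

namespace Matrix

variable {n : Type*} [Fintype n] {B : Matrix n n ℝ}

theorem rank_eq_card_sub_one_of_dotProduct_mulVec_nonpos (hB : B.IsHermitian)
    (hle : ∀ x, x ⬝ᵥ B *ᵥ x ≤ 0) (f : (n → ℝ) →ₗ[ℝ] ℝ)
    (hneg : ∀ x, x ≠ 0 → f x = 0 → x ⬝ᵥ B *ᵥ x < 0) {y : n → ℝ}
    (hy : y ⬝ᵥ B *ᵥ y = 0) (hfy : f y ≠ 0) : B.rank = Fintype.card n - 1 := by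
  have hpsd : (-B).PosSemidef :=
    .of_dotProduct_mulVec_nonneg hB.neg fun x => by
      rw [star_trivial, neg_mulVec, dotProduct_neg]
      linarith [hle x]
  have hBy : B *ᵥ y = 0 := by
    have := (hpsd.dotProduct_mulVec_zero_iff y).mp
      (by rw [star_trivial, neg_mulVec, dotProduct_neg, hy, neg_zero])
    rwa [neg_mulVec, neg_eq_zero] at this
  have hker : LinearMap.ker B.mulVecLin = Submodule.span ℝ {y} := by
    ext x
    rw [LinearMap.mem_ker, mulVecLin_apply, Submodule.mem_span_singleton]
    constructor
    · intro hx
      have hz : B *ᵥ (x - (f x / f y) • y) = 0 := by simp [mulVec_sub, mulVec_smul, hx, hBy]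
      have hfz : f (x - (f x / f y) • y) = 0 := by simp [hfy]
      refine ⟨f x / f y, (sub_eq_zero.mp (by_contra fun hne => ?_)).symm⟩
      have := hneg _ hne hfz
      rw [hz, dotProduct_zero] at this
      exact lt_irrefl _ this
    · rintro ⟨c, rfl⟩
      simp [mulVec_smul, hBy]
  have hy0 : y ≠ 0 := by rintro rfl; simp at hfy
  have := LinearMap.finrank_range_add_finrank_ker B.mulVecLin
  rw [hker, finrank_span_singleton hy0, Module.finrank_fintype_fun_eq_card] at this
  rw [rank]
  omega

variable [DecidableEq n]

lemma IsHermitian.posSemidef_neg_of_eigenvalues_nonpos (hB : B.IsHermitian)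
    (h : ∀ i, hB.eigenvalues i ≤ 0) : (-B).PosSemidef := by
  have hspec : -B = Unitary.conjStarAlgAut ℝ _ hB.eigenvectorUnitary
      (diagonal fun i => -(RCLike.ofReal ∘ hB.eigenvalues) i) := by
    rw [← diagonal_neg, map_neg, ← hB.spectral_theorem]
  rw [hspec, Unitary.conjStarAlgAut_apply,
    IsUnit.posSemidef_star_right_conjugate_iff Unitary.isUnit_coe, posSemidef_diagonal_iff]
  intro i
  simpa using h i

lemma IsHermitian.exists_eigenvalues_pos_of_dotProduct_mulVec_pos (hB : B.IsHermitian) {y : n → ℝ}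
    (hy : 0 < y ⬝ᵥ B *ᵥ y) : ∃ i, 0 < hB.eigenvalues i := by
  by_contra! h
  have := (hB.posSemidef_neg_of_eigenvalues_nonpos h).dotProduct_mulVec_nonneg y
  simp only [star_trivial, neg_mulVec, dotProduct_neg] at this
  linarith

lemma IsHermitian.eigenvectorBasis_dotProduct (hB : B.IsHermitian) (i j : n) :
    ⇑(hB.eigenvectorBasis i) ⬝ᵥ ⇑(hB.eigenvectorBasis j) = if i = j then 1 else 0 := by
  rw [← orthonormal_iff_ite.mp hB.eigenvectorBasis.orthonormal i j,
    EuclideanSpace.inner_eq_star_dotProduct, star_trivial, dotProduct_comm]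

lemma IsHermitian.eq_of_eigenvalues_nonneg (hB : B.IsHermitian) (f : (n → ℝ) →ₗ[ℝ] ℝ)
    (hneg : ∀ x, x ≠ 0 → f x = 0 → x ⬝ᵥ B *ᵥ x < 0) {i j : n}
    (hi : 0 ≤ hB.eigenvalues i) (hj : 0 ≤ hB.eigenvalues j) : i = j := by
  by_contra hij
  set u := ⇑(hB.eigenvectorBasis i)
  set w := ⇑(hB.eigenvectorBasis j)
  -- a nonzero combination of the two eigenvectors lies in `ker f`, yet has nonnegative form
  obtain ⟨α, β, hαβ, hf⟩ : ∃ α β : ℝ, (α ≠ 0 ∨ β ≠ 0) ∧ f (α • u + β • w) = 0 := by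
    by_cases hu : f u = 0
    · exact ⟨1, 0, by simp, by simp [hu]⟩
    · exact ⟨f w, -f u, Or.inr (neg_ne_zero.mpr hu), by simp only [map_add, map_smul, map_neg, neg_smul, smul_eq_mul]; ring⟩
  have huu : u ⬝ᵥ u = 1 := by simpa using hB.eigenvectorBasis_dotProduct i i
  have hww : w ⬝ᵥ w = 1 := by simpa using hB.eigenvectorBasis_dotProduct j j
  have huw : u ⬝ᵥ w = 0 := by simpa [hij] using hB.eigenvectorBasis_dotProduct i j
  have hwu : w ⬝ᵥ u = 0 := by rw [dotProduct_comm, huw]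
  have hz : α • u + β • w ≠ 0 := by
    intro h0
    have hα : (α • u + β • w) ⬝ᵥ u = α := by simp [add_dotProduct, huu, hwu]
    have hβ : (α • u + β • w) ⬝ᵥ w = β := by simp [add_dotProduct, hww, huw]
    rw [h0, zero_dotProduct] at hα hβ
    exact hαβ.elim (· hα.symm) (· hβ.symm)
  have hBu : B *ᵥ u = hB.eigenvalues i • u := hB.mulVec_eigenvectorBasis i
  have hBw : B *ᵥ w = hB.eigenvalues j • w := hB.mulVec_eigenvectorBasis j
  have hQ : (α • u + β • w) ⬝ᵥ B *ᵥ (α • u + β • w)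
      = α ^ 2 * hB.eigenvalues i + β ^ 2 * hB.eigenvalues j := by
    simp only [mulVec_add, mulVec_smul, hBu, hBw, add_dotProduct, dotProduct_add, smul_dotProduct,
      dotProduct_smul, huu, hww, huw, hwu, smul_eq_mul]
    ring
  have := hneg _ hz hf
  nlinarith [mul_nonneg (sq_nonneg α) hi, mul_nonneg (sq_nonneg β) hj]

theorem IsHermitian.det_ne_zero_and_card_pos_eigenvalues_eq_one (hB : B.IsHermitian)
    (f : (n → ℝ) →ₗ[ℝ] ℝ) (hneg : ∀ x, x ≠ 0 → f x = 0 → x ⬝ᵥ B *ᵥ x < 0) {y : n → ℝ}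
    (hy : 0 < y ⬝ᵥ B *ᵥ y) :
    B.det ≠ 0 ∧ (Finset.univ.filter fun i => 0 < hB.eigenvalues i).card = 1 := by
  obtain ⟨i₀, hi₀⟩ := hB.exists_eigenvalues_pos_of_dotProduct_mulVec_pos hy
  have hunique : ∀ i, 0 ≤ hB.eigenvalues i → i = i₀ := fun i hi =>
    hB.eq_of_eigenvalues_nonneg f hneg hi hi₀.le
  constructor
  · rw [hB.det_eq_prod_eigenvalues, Finset.prod_ne_zero_iff]
    rintro i - h0
    have hi : hB.eigenvalues i = 0 := by simpa using h0
    obtain rfl := hunique i hi.ge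
    exact hi₀.ne' hi
  · rw [Finset.card_eq_one]
    exact ⟨i₀, by ext i; simpa using ⟨fun h => hunique i h.le, fun h => h ▸ hi₀⟩⟩

end Matrix

lemma sum_tipEntry_mul (m : ℕ) (z : Fin (m + 1) → ℝ) :
    ∑ i : Fin (m + 1), tipEntry i * z i = z 0 := by
  simp [tipEntry]

lemma sum_sum_ite_succ_eq (m : ℕ) (z : Fin (m + 1) → ℝ) :
    ∑ i : Fin (m + 1), ∑ j : Fin (m + 1), (if (i : ℕ) + 1 = j then z i * z j else 0)
      = ∑ k : Fin m, z k.castSucc * z k.succ := by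
  have hlast : ∀ j : Fin (m + 1), m + 1 ≠ (j : ℕ) := fun j => by omega
  have hsucc : ∀ (k : Fin m) (j : Fin (m + 1)), (k : ℕ) + 1 = j ↔ k.succ = j := fun k j => by
    simp [Fin.ext_iff]
  rw [Fin.sum_univ_castSucc]
  simp [hlast, hsucc]

lemma sum_mul_sum_pathEntry_mul (m : ℕ) (z : Fin (m + 1) → ℝ) :
    ∑ i : Fin (m + 1), z i * ∑ j : Fin (m + 1), pathEntry i j * z j
      = 2 * ∑ k : Fin m, z k.castSucc * z k.succ := by
  have hsplit : ∀ i j : Fin (m + 1), z i * (pathEntry i j * z j)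
      = (if (i : ℕ) + 1 = j then z i * z j else 0)
        + (if (j : ℕ) + 1 = i then z j * z i else 0) := by
    intro i j
    unfold pathEntry
    split_ifs <;> first | omega | ring
  conv_lhs => simp only [Finset.mul_sum, hsplit, Finset.sum_add_distrib]
  rw [Finset.sum_comm (f := fun i j : Fin (m + 1) => if (j : ℕ) + 1 = i then z j * z i else 0),
    sum_sum_ite_succ_eq]
  ring

lemma sum_mul_adjT_arm (m : ℕ) (t : ℝ) (z : Fin (m + 1) → ℝ) :
    ∑ i : Fin (m + 1), z i * (tipEntry i * t + ∑ j : Fin (m + 1), pathEntry i j * z j)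
      = t * z 0 + 2 * ∑ k : Fin m, z k.castSucc * z k.succ := by
  have htip : ∑ i : Fin (m + 1), z i * (tipEntry i * t)
      = t * ∑ i : Fin (m + 1), tipEntry i * z i := by
    rw [Finset.mul_sum]
    exact Finset.sum_congr rfl fun i _ => by ring
  simp only [mul_add, Finset.sum_add_distrib, sum_mul_sum_pathEntry_mul, htip, sum_tipEntry_mul]

/-- The arm's share of `-x ⬝ B x`, shifted by `(1 - 1/(m + 2)) t²` so that its minimum over `z`
is `0`. -/
noncomputable def armEnergy (m : ℕ) (t : ℝ) (z : Fin (m + 1) → ℝ) : ℝ :=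
  2 * ∑ i, z i ^ 2 - 2 * ∑ k : Fin m, z k.castSucc * z k.succ - 2 * t * z 0
    + (m + 1) / (m + 2) * t ^ 2

lemma armEnergy_zero (t : ℝ) (z : Fin 1 → ℝ) : armEnergy 0 t z = 2 * (z 0 - t / 2) ^ 2 := by
  rw [armEnergy, Fin.sum_univ_one, Fin.sum_univ_zero]
  push_cast
  ring

lemma armEnergy_succ (m : ℕ) (t : ℝ) (z : Fin (m + 2) → ℝ) :
    armEnergy (m + 1) t z = armEnergy m (z 0) (Fin.tail z)
      + (m + 3) / (m + 2) * (z 0 - (m + 2) / (m + 3) * t) ^ 2 := by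
  simp only [armEnergy, Fin.sum_univ_succ (n := m + 1), Fin.sum_univ_succ (n := m), Fin.tail,
    Fin.succ_castSucc, Fin.castSucc_zero, Fin.succ_zero_eq_one]
  push_cast
  field_simp
  ring

lemma armEnergy_nonneg (m : ℕ) (t : ℝ) (z : Fin (m + 1) → ℝ) : 0 ≤ armEnergy m t z := by
  induction m generalizing t with
  | zero => rw [armEnergy_zero]; positivity
  | succ m ih => rw [armEnergy_succ]; exact add_nonneg (ih _ _) (by positivity)

lemma eq_zero_of_armEnergy_zero_eq_zero {m : ℕ} {z : Fin (m + 1) → ℝ}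
    (h : armEnergy m 0 z = 0) : z = 0 := by
  induction m with
  | zero =>
    rw [armEnergy_zero] at h
    funext i
    fin_cases i
    simpa using h
  | succ m ih =>
    rw [armEnergy_succ, mul_zero, sub_zero] at h
    have hsq : ((m : ℝ) + 3) / (m + 2) * z 0 ^ 2 = 0 :=
      le_antisymm (by linarith [armEnergy_nonneg m (z 0) (Fin.tail z)]) (by positivity)
    have hz₀ : z 0 = 0 := by simpa [(by positivity : ((m : ℝ) + 3) / (m + 2) ≠ 0)] using hsq
    rw [hz₀, zero_pow two_ne_zero, mul_zero, add_zero] at h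
    have htail : Fin.tail z = 0 := ih h
    funext i
    cases i using Fin.cases with
    | zero => exact hz₀
    | succ i => exact congrFun htail i

noncomputable def armProfile (m : ℕ) (t : ℝ) : Fin (m + 1) → ℝ :=
  fun i => (m + 1 - i) / (m + 2) * t

lemma armEnergy_armProfile (m : ℕ) (t : ℝ) : armEnergy m t (armProfile m t) = 0 := by
  induction m generalizing t with
  | zero =>
    simp only [armEnergy_zero, armProfile, Fin.val_zero]
    push_cast
    ring
  | succ m ih =>
    have htail : Fin.tail (armProfile (m + 1) t) = armProfile m (armProfile (m + 1) t 0) := by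
      funext i
      simp only [Fin.tail, armProfile, Fin.val_succ, Fin.val_zero]
      push_cast
      field_simp
      ring
    rw [armEnergy_succ, htail, ih]
    simp only [armProfile, Fin.val_zero]
    push_cast
    field_simp
    ring

section Tree

variable (a b c : ℕ)

/-- The arms of `TVertex (a + 2) (b + 2) (c + 2)` are `Fin (a + 2 - 1)`, ..., only defeq to
`Fin (a + 1)`, ...; in this form the arm lemmas (stated on `Fin (m + 1)`) match syntactically. -/
lemma sum_TVertex {M : Type*} [AddCommMonoid M] (f : TVertex (a + 2) (b + 2) (c + 2) → M) :
    ∑ v, f v = f none + ∑ i : Fin (a + 1), f (some (.inl i))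
      + ∑ i : Fin (b + 1), f (some (.inr (.inl i)))
      + ∑ i : Fin (c + 1), f (some (.inr (.inr i))) := by
  rw [Fintype.sum_option, Fintype.sum_sum_type, Fintype.sum_sum_type, ← add_assoc, ← add_assoc]
  rfl

noncomputable def armsEnergyT (x : TVertex (a + 2) (b + 2) (c + 2) → ℝ) : ℝ :=
  armEnergy a (x none) (x ∘ some ∘ Sum.inl) + armEnergy b (x none) (x ∘ some ∘ Sum.inr ∘ Sum.inl)
    + armEnergy c (x none) (x ∘ some ∘ Sum.inr ∘ Sum.inr)

lemma dotProduct_gramT_mulVec (x : TVertex (a + 2) (b + 2) (c + 2) → ℝ) :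
    x ⬝ᵥ gramT (a + 2) (b + 2) (c + 2) *ᵥ x
      = (1 - (1 / ((a + 2 : ℕ) : ℝ) + 1 / ((b + 2 : ℕ) : ℝ) + 1 / ((c + 2 : ℕ) : ℝ))) * x none ^ 2
        - armsEnergyT a b c x := by
  have hadj : x ⬝ᵥ adjT (a + 2) (b + 2) (c + 2) *ᵥ x
      = 2 * x none * (x (some (.inl (0 : Fin (a + 1)))) + x (some (.inr (.inl (0 : Fin (b + 1)))))
          + x (some (.inr (.inr (0 : Fin (c + 1))))))
        + 2 * ∑ k : Fin a, x (some (.inl k.castSucc)) * x (some (.inl k.succ))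
        + 2 * ∑ k : Fin b, x (some (.inr (.inl k.castSucc))) * x (some (.inr (.inl k.succ)))
        + 2 * ∑ k : Fin c, x (some (.inr (.inr k.castSucc))) * x (some (.inr (.inr k.succ))) := by
    simp only [dotProduct, Matrix.mulVec, sum_TVertex, adjT, zero_mul, add_zero, zero_add,
      Finset.sum_const_zero, sum_tipEntry_mul, sum_mul_adjT_arm]
    ring
  have hself : x ⬝ᵥ x = x none ^ 2 + ∑ i : Fin (a + 1), x (some (.inl i)) ^ 2
      + ∑ i : Fin (b + 1), x (some (.inr (.inl i))) ^ 2
      + ∑ i : Fin (c + 1), x (some (.inr (.inr i))) ^ 2 := by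
    simp only [dotProduct, sum_TVertex, sq]
  rw [gramT, Matrix.sub_mulVec, Matrix.smul_mulVec, Matrix.one_mulVec, dotProduct_sub,
    dotProduct_smul, hadj, hself, smul_eq_mul, armsEnergyT]
  simp only [armEnergy, Function.comp_apply]
  push_cast
  field_simp
  ring

lemma armsEnergyT_nonneg (x : TVertex (a + 2) (b + 2) (c + 2) → ℝ) : 0 ≤ armsEnergyT a b c x :=
  add_nonneg (add_nonneg (armEnergy_nonneg _ _ _) (armEnergy_nonneg _ _ _)) (armEnergy_nonneg _ _ _)

lemma eq_zero_of_armsEnergyT_eq_zero {x : TVertex (a + 2) (b + 2) (c + 2) → ℝ}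
    (hx : x none = 0) (h : armsEnergyT a b c x = 0) : x = 0 := by
  rw [armsEnergyT, hx] at h
  have h₁ := armEnergy_nonneg a 0 (x ∘ some ∘ Sum.inl)
  have h₂ := armEnergy_nonneg b 0 (x ∘ some ∘ Sum.inr ∘ Sum.inl)
  have h₃ := armEnergy_nonneg c 0 (x ∘ some ∘ Sum.inr ∘ Sum.inr)
  have hx₁ := congrFun (eq_zero_of_armEnergy_zero_eq_zero (by linarith : armEnergy a 0 _ = 0))
  have hx₂ := congrFun (eq_zero_of_armEnergy_zero_eq_zero (by linarith : armEnergy b 0 _ = 0))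
  have hx₃ := congrFun (eq_zero_of_armEnergy_zero_eq_zero (by linarith : armEnergy c 0 _ = 0))
  funext v
  rcases v with _ | i | i | i
  exacts [hx, hx₁ i, hx₂ i, hx₃ i]

lemma dotProduct_gramT_mulVec_neg {x : TVertex (a + 2) (b + 2) (c + 2) → ℝ} (hx : x ≠ 0)
    (hx₀ : x none = 0) : x ⬝ᵥ gramT (a + 2) (b + 2) (c + 2) *ᵥ x < 0 := by
  rw [dotProduct_gramT_mulVec, hx₀, zero_pow two_ne_zero, mul_zero, zero_sub, neg_neg_iff_pos]
  exact (armsEnergyT_nonneg a b c x).lt_of_ne fun h =>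
    hx (eq_zero_of_armsEnergyT_eq_zero a b c hx₀ h.symm)

noncomputable def profileT : TVertex (a + 2) (b + 2) (c + 2) → ℝ
  | none => 1
  | some (.inl i) => armProfile a 1 i
  | some (.inr (.inl i)) => armProfile b 1 i
  | some (.inr (.inr i)) => armProfile c 1 i

lemma dotProduct_gramT_mulVec_profileT :
    profileT a b c ⬝ᵥ gramT (a + 2) (b + 2) (c + 2) *ᵥ profileT a b c
      = 1 - (1 / ((a + 2 : ℕ) : ℝ) + 1 / ((b + 2 : ℕ) : ℝ) + 1 / ((c + 2 : ℕ) : ℝ)) := by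
  have h : armsEnergyT a b c (profileT a b c)
      = armEnergy a 1 (armProfile a 1) + armEnergy b 1 (armProfile b 1)
        + armEnergy c 1 (armProfile c 1) := rfl
  rw [dotProduct_gramT_mulVec, h, armEnergy_armProfile, armEnergy_armProfile, armEnergy_armProfile]
  simp [profileT]

end Tree

lemma adjT_isHermitian (p q r : ℕ) : (adjT p q r).IsHermitian := by
  ext v w
  rcases v with _ | i | i | i <;> rcases w with _ | j | j | j <;> simp [adjT, pathEntry, or_comm]

lemma gramT_isHermitian (p q r : ℕ) : (gramT p q r).IsHermitian :=
  (adjT_isHermitian p q r).sub (Matrix.isHermitian_one.smul (IsSelfAdjoint.all (2 : ℝ)))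

/-- The Gram matrix of `T_{p,q,r}^{(2)}` is hyperbolic (nondegenerate with
exactly one positive eigenvalue) when `1/p + 1/q + 1/r < 1`, affine (negative
semidefinite with one-dimensional kernel) when `1/p + 1/q + 1/r = 1`, and
negative definite when `1/p + 1/q + 1/r > 1`. -/
theorem gramT_trichotomy (p q r : ℕ) (hp : 2 ≤ p) (hq : 2 ≤ q) (hr : 2 ≤ r) :
    (1 / (p : ℝ) + 1 / (q : ℝ) + 1 / (r : ℝ) < 1 →
      (gramT p q r).det ≠ 0 ∧
      ∃ hB : (gramT p q r).IsHermitian,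
        (Finset.univ.filter (fun i => 0 < hB.eigenvalues i)).card = 1) ∧
    (1 / (p : ℝ) + 1 / (q : ℝ) + 1 / (r : ℝ) = 1 →
      (∀ x : TVertex p q r → ℝ, x ⬝ᵥ (gramT p q r).mulVec x ≤ 0) ∧
      (gramT p q r).rank = Fintype.card (TVertex p q r) - 1) ∧
    (1 < 1 / (p : ℝ) + 1 / (q : ℝ) + 1 / (r : ℝ) →
      ∀ x : TVertex p q r → ℝ, x ≠ 0 → x ⬝ᵥ (gramT p q r).mulVec x < 0) := by
  obtain ⟨a, rfl⟩ : ∃ a, p = a + 2 := ⟨p - 2, by omega⟩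
  obtain ⟨b, rfl⟩ : ∃ b, q = b + 2 := ⟨q - 2, by omega⟩
  obtain ⟨c, rfl⟩ : ∃ c, r = c + 2 := ⟨r - 2, by omega⟩
  have hB := gramT_isHermitian (a + 2) (b + 2) (c + 2)
  let f : (TVertex (a + 2) (b + 2) (c + 2) → ℝ) →ₗ[ℝ] ℝ := LinearMap.proj none
  have hneg : ∀ x, x ≠ 0 → f x = 0 → x ⬝ᵥ gramT (a + 2) (b + 2) (c + 2) *ᵥ x < 0 :=
    fun _ => dotProduct_gramT_mulVec_neg a b c
  have hy := dotProduct_gramT_mulVec_profileT a b c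
  refine ⟨fun h => ?_, fun h => ?_, fun h x hx => ?_⟩
  · obtain ⟨hdet, hcard⟩ := hB.det_ne_zero_and_card_pos_eigenvalues_eq_one f hneg
      (hy.symm ▸ sub_pos.mpr h)
    exact ⟨hdet, hB, hcard⟩
  · have hle : ∀ x, x ⬝ᵥ gramT (a + 2) (b + 2) (c + 2) *ᵥ x ≤ 0 := fun x => by
      rw [dotProduct_gramT_mulVec, h, sub_self, zero_mul, zero_sub, neg_nonpos]
      exact armsEnergyT_nonneg a b c x
    exact ⟨hle, Matrix.rank_eq_card_sub_one_of_dotProduct_mulVec_nonpos hB hle f hneg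
      (by rw [hy, h, sub_self]) one_ne_zero⟩
  · by_cases hx₀ : x none = 0
    · exact dotProduct_gramT_mulVec_neg a b c hx hx₀
    · rw [dotProduct_gramT_mulVec]
      nlinarith [armsEnergyT_nonneg a b c x, sq_pos_of_ne_zero hx₀]
end

section
/- Let μ = μ(2,3,7) be the largest eigenvalue of the adjacency matrix of the tree T_{2,3,7} (10 vertices: a central vertex with attached paths of 1, 2 and 6 vertices). Then μ > 2, and the unique real number m > 1 with m + m^{−1} + 2 = μ² is the largest real root of Lehmer's polynomial x^{10} + x^9 − x^7 − x^6 − x^5 − x^4 − x^3 + x + 1; in particular m is Lehmer's number. -/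
/-- Lehmer's polynomial `x^10 + x^9 - x^7 - x^6 - x^5 - x^4 - x^3 + x + 1`. -/
def lehmerPoly (x : ℝ) : ℝ :=
  x ^ 10 + x ^ 9 - x ^ 7 - x ^ 6 - x ^ 5 - x ^ 4 - x ^ 3 + x + 1

/-!
An eigenvector of `T_{p,q,r}` is determined on each arm by its value `e` at the free end: by the
eigenvalue equation, the entry at distance `n` from the free end is `S_n(t) e`, for the Chebyshev
polynomials `S_{n+1} = X S_n - S_{n-1}` (the characteristic polynomials of paths). The
equation at the central vertex then says that `t` is a root of
`X S_a S_b S_c - S_{a-1} S_b S_c - S_a S_{b-1} S_c - S_a S_b S_{c-1}`, where `a, b, c` are the arm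
lengths, and conversely every root `t ≥ 2` is an eigenvalue since all `S_n(t)` are then positive.
For `T_{2,3,7}` this polynomial is even, and the substitution `t² = m + m⁻¹ + 2` turns it into
`m⁻⁵` times Lehmer's polynomial. As `m ↦ m + m⁻¹` is increasing on `[1, ∞)`, the largest
eigenvalue corresponds to the largest root of Lehmer's polynomial; it exceeds `2` because the
polynomial changes sign on `[2, 3]`.
-/

open Polynomial Polynomial.Chebyshev

theorem Matrix.finite_setOf_exists_mulVec_eq_smul {n K : Type*} [Fintype n] [DecidableEq n]
    [Field K] (A : Matrix n n K) : {μ : K | ∃ x, x ≠ 0 ∧ A.mulVec x = μ • x}.Finite :=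
  (Module.End.finite_hasEigenvalue (Matrix.toLin' A)).subset fun _ ⟨x, hx, h⟩ =>
    Module.End.hasEigenvalue_of_hasEigenvector
      ⟨Module.End.mem_eigenspace_iff.mpr (by simpa using h), hx⟩

theorem le_muT {p q r : ℕ} {t : ℝ} {x : TVertex p q r → ℝ} (hx : x ≠ 0)
    (h : (adjT p q r).mulVec x = t • x) : t ≤ muT p q r :=
  le_csSup (Matrix.finite_setOf_exists_mulVec_eq_smul _).bddAbove ⟨x, hx, h⟩

theorem exists_mulVec_eq_muT_smul {p q r : ℕ}
    (h : ∃ t : ℝ, ∃ x : TVertex p q r → ℝ, x ≠ 0 ∧ (adjT p q r).mulVec x = t • x) :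
    ∃ x : TVertex p q r → ℝ, x ≠ 0 ∧ (adjT p q r).mulVec x = muT p q r • x :=
  Set.Nonempty.csSup_mem h (Matrix.finite_setOf_exists_mulVec_eq_smul _)

theorem Polynomial.Chebyshev.one_le_eval_S {t : ℝ} (ht : 2 ≤ t) (n : ℕ) :
    1 ≤ (S ℝ n).eval t := by
  suffices h : ∀ n : ℕ, 1 ≤ (S ℝ n).eval t ∧ (S ℝ n).eval t ≤ (S ℝ (n + 1)).eval t from (h n).1
  intro n
  induction n with
  | zero => simpa using one_le_two.trans ht
  | succ n ih =>
    refine ⟨ih.1.trans ih.2, ?_⟩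
    push_cast at ih ⊢
    rw [show (n : ℤ) + 1 + 1 = n + 2 by ring, S_add_two]
    simp only [eval_sub, eval_mul, eval_X]
    nlinarith

theorem recurrence_iff_eq_eval_S_mul {t : ℝ} {k : ℕ} {w : ℕ → ℝ} :
    (w (k + 1) = 0 ∧ ∀ n < k, t * w (n + 1) = w n + w (n + 2)) ↔
      ∀ n ≤ k + 1, w n = (S ℝ (k - n)).eval t * w k := by
  constructor
  · rintro ⟨hend, hrec⟩
    have key : ∀ d ≤ k, w (k - d) = (S ℝ d).eval t * w k ∧
        w (k + 1 - d) = (S ℝ (d - 1)).eval t * w k := by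
      intro d
      induction d with
      | zero => simp [hend]
      | succ d ih =>
        intro hd
        obtain ⟨h₁, h₂⟩ := ih (by omega)
        have hr := hrec (k - (d + 1)) (by omega)
        rw [show k - (d + 1) + 1 = k - d by omega, show k - (d + 1) + 2 = k + 1 - d by omega,
          h₁, h₂] at hr
        refine ⟨?_, by simp [show k + 1 - (d + 1) = k - d by omega, h₁]⟩
        push_cast
        rw [S_add_one]
        simp only [eval_sub, eval_mul, eval_X]
        linarith
    intro n hn
    rcases Nat.lt_or_ge k n with h | h
    · obtain rfl : n = k + 1 := by omega
      simpa using (key 0 (Nat.zero_le _)).2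
    · have := (key (k - n) (by omega)).1
      rwa [Nat.sub_sub_self h, Nat.cast_sub h] at this
  · intro h
    refine ⟨by simpa using h (k + 1) le_rfl, fun n hn => ?_⟩
    rw [h n (by omega), h (n + 1) (by omega), h (n + 2) (by omega)]
    push_cast
    rw [show (k : ℤ) - n = k - (n + 1) + 1 by ring, S_add_one,
      show (k : ℤ) - (n + 2) = k - (n + 1) - 1 by ring]
    simp only [eval_sub, eval_mul, eval_X]
    ring

/-- The values on an arm of length `k`, read from the centre: position `0` is the central vertex
(value `c`), position `n + 1` the `n`-th vertex of the arm, and positions past the free end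
carry `0`. -/
def armExt {k : ℕ} (c : ℝ) (f : Fin k → ℝ) : ℕ → ℝ
  | 0 => c
  | n + 1 => if h : n < k then f ⟨n, h⟩ else 0

theorem sum_ite_val_eq_armExt {k : ℕ} (c : ℝ) (f : Fin k → ℝ) (n : ℕ) :
    ∑ j : Fin k, (if (j : ℕ) = n then f j else 0) = armExt c f (n + 1) := by
  by_cases h : n < k
  · rw [Finset.sum_eq_single ⟨n, h⟩ (fun j _ hj => if_neg fun h' => hj (Fin.ext h')) (by simp)]
    simp [armExt, h]
  · exact (Finset.sum_eq_zero fun j _ => if_neg (by omega)).trans (by simp [armExt, h])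

theorem sum_tipEntry_mul_s19 {k : ℕ} (c : ℝ) (f : Fin k → ℝ) :
    ∑ j : Fin k, tipEntry j * f j = armExt c f 1 := by
  simpa [tipEntry] using sum_ite_val_eq_armExt c f 0

theorem tipEntry_mul_add_sum_pathEntry_mul {k : ℕ} (c : ℝ) (f : Fin k → ℝ) (i : Fin k) :
    tipEntry i * c + ∑ j : Fin k, pathEntry i j * f j = armExt c f i + armExt c f (i + 2) := by
  have hsplit : ∀ j : Fin k, pathEntry i j * f j =
      (if (j : ℕ) = i + 1 then f j else 0) + (if (j : ℕ) + 1 = i then f j else 0) := by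
    intro j; unfold pathEntry; split_ifs <;> first | (exfalso; omega) | ring
  rw [Finset.sum_congr rfl fun j _ => hsplit j, Finset.sum_add_distrib, sum_ite_val_eq_armExt c]
  obtain ⟨_ | i, hi⟩ := i
  · simp [tipEntry, armExt]
  · simp only [Nat.add_right_cancel_iff, sum_ite_val_eq_armExt c, tipEntry, Nat.add_eq_zero_iff,
      one_ne_zero, and_false, ↓reduceIte, zero_mul, zero_add]
    ring

theorem forall_armExt_eq_iff {k : ℕ} (t c : ℝ) (f : Fin k → ℝ) :
    (∀ n < k, t * armExt c f (n + 1) = armExt c f n + armExt c f (n + 2)) ↔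
      ∀ n ≤ k + 1, armExt c f n = (S ℝ (k - n)).eval t * armExt c f k := by
  rw [← recurrence_iff_eq_eval_S_mul, and_iff_right (by simp [armExt])]

section Arms

variable {p q r : ℕ}

def firstArm (x : TVertex p q r → ℝ) : ℕ → ℝ := armExt (x none) fun i => x (some (.inl i))

def secondArm (x : TVertex p q r → ℝ) : ℕ → ℝ :=
  armExt (x none) fun i => x (some (.inr (.inl i)))

def thirdArm (x : TVertex p q r → ℝ) : ℕ → ℝ :=
  armExt (x none) fun i => x (some (.inr (.inr i)))

@[simp] theorem firstArm_zero (x : TVertex p q r → ℝ) : firstArm x 0 = x none := rfl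

@[simp] theorem secondArm_zero (x : TVertex p q r → ℝ) : secondArm x 0 = x none := rfl

@[simp] theorem thirdArm_zero (x : TVertex p q r → ℝ) : thirdArm x 0 = x none := rfl

theorem adjT_mulVec_none (x : TVertex p q r → ℝ) :
    (adjT p q r).mulVec x none = firstArm x 1 + secondArm x 1 + thirdArm x 1 := by
  simp only [Matrix.mulVec, dotProduct, Fintype.sum_option, Fintype.sum_sum_type, adjT, zero_mul,
    zero_add, firstArm, secondArm, thirdArm, ← sum_tipEntry_mul_s19, add_assoc]

theorem adjT_mulVec_first (x : TVertex p q r → ℝ) (i : Fin (p - 1)) :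
    (adjT p q r).mulVec x (some (.inl i)) = firstArm x i + firstArm x (i + 2) := by
  simp only [Matrix.mulVec, dotProduct, Fintype.sum_option, Fintype.sum_sum_type, adjT, zero_mul,
    add_zero, firstArm, Finset.sum_const_zero, ← tipEntry_mul_add_sum_pathEntry_mul]

theorem adjT_mulVec_second (x : TVertex p q r → ℝ) (i : Fin (q - 1)) :
    (adjT p q r).mulVec x (some (.inr (.inl i))) = secondArm x i + secondArm x (i + 2) := by
  simp only [Matrix.mulVec, dotProduct, Fintype.sum_option, Fintype.sum_sum_type, adjT, zero_mul,
    add_zero, zero_add, secondArm, Finset.sum_const_zero, ← tipEntry_mul_add_sum_pathEntry_mul]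

theorem adjT_mulVec_third (x : TVertex p q r → ℝ) (i : Fin (r - 1)) :
    (adjT p q r).mulVec x (some (.inr (.inr i))) = thirdArm x i + thirdArm x (i + 2) := by
  simp only [Matrix.mulVec, dotProduct, Fintype.sum_option, Fintype.sum_sum_type, adjT, zero_mul,
    zero_add, thirdArm, Finset.sum_const_zero, ← tipEntry_mul_add_sum_pathEntry_mul]

theorem adjT_mulVec_eq_smul_iff (x : TVertex p q r → ℝ) (t : ℝ) :
    (adjT p q r).mulVec x = t • x ↔
      t * x none = firstArm x 1 + secondArm x 1 + thirdArm x 1 ∧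
      (∀ n < p - 1, t * firstArm x (n + 1) = firstArm x n + firstArm x (n + 2)) ∧
      (∀ n < q - 1, t * secondArm x (n + 1) = secondArm x n + secondArm x (n + 2)) ∧
      (∀ n < r - 1, t * thirdArm x (n + 1) = thirdArm x n + thirdArm x (n + 2)) := by
  have first (n : ℕ) (hn : n < p - 1) : firstArm x (n + 1) = x (some (.inl ⟨n, hn⟩)) := by
    simp [firstArm, armExt, hn]
  have second (n : ℕ) (hn : n < q - 1) :
      secondArm x (n + 1) = x (some (.inr (.inl ⟨n, hn⟩))) := by
    simp [secondArm, armExt, hn]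
  have third (n : ℕ) (hn : n < r - 1) : thirdArm x (n + 1) = x (some (.inr (.inr ⟨n, hn⟩))) := by
    simp [thirdArm, armExt, hn]
  constructor
  · intro h
    refine ⟨?_, fun n hn => ?_, fun n hn => ?_, fun n hn => ?_⟩
    · simpa [adjT_mulVec_none] using (congrFun h none).symm
    · simpa [adjT_mulVec_first, first n hn] using (congrFun h (some (.inl ⟨n, hn⟩))).symm
    · simpa [adjT_mulVec_second, second n hn] using
        (congrFun h (some (.inr (.inl ⟨n, hn⟩)))).symm
    · simpa [adjT_mulVec_third, third n hn] using
        (congrFun h (some (.inr (.inr ⟨n, hn⟩)))).symm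
  · rintro ⟨h₀, h₁, h₂, h₃⟩
    funext v
    rcases v with _ | ⟨⟨n, hn⟩⟩ | ⟨⟨n, hn⟩⟩ | ⟨⟨n, hn⟩⟩
    · simp [adjT_mulVec_none, h₀]
    · simp [adjT_mulVec_first, ← h₁ n hn, first n hn]
    · simp [adjT_mulVec_second, ← h₂ n hn, second n hn]
    · simp [adjT_mulVec_third, ← h₃ n hn, third n hn]

theorem adjT_mulVec_eq_smul_iff_eval_S (x : TVertex p q r → ℝ) (t : ℝ) :
    (adjT p q r).mulVec x = t • x ↔
      t * x none = firstArm x 1 + secondArm x 1 + thirdArm x 1 ∧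
      (∀ n ≤ p - 1 + 1, firstArm x n = (S ℝ (↑(p - 1) - n)).eval t * firstArm x (p - 1)) ∧
      (∀ n ≤ q - 1 + 1, secondArm x n = (S ℝ (↑(q - 1) - n)).eval t * secondArm x (q - 1)) ∧
      (∀ n ≤ r - 1 + 1, thirdArm x n = (S ℝ (↑(r - 1) - n)).eval t * thirdArm x (r - 1)) := by
  rw [adjT_mulVec_eq_smul_iff]
  simp only [firstArm, secondArm, thirdArm, forall_armExt_eq_iff]

end Arms

/-- The characteristic polynomial of `T_{a+1,b+1,c+1}`, expanded along the central vertex. -/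
noncomputable def treePoly (a b c : ℕ) : ℝ[X] :=
  X * S ℝ a * S ℝ b * S ℝ c - S ℝ (a - 1) * S ℝ b * S ℝ c - S ℝ a * S ℝ (b - 1) * S ℝ c -
    S ℝ a * S ℝ b * S ℝ (c - 1)

theorem eval_treePoly_eq_zero_of_mulVec_eq_smul {p q r : ℕ} {t : ℝ} {x : TVertex p q r → ℝ}
    (hx : x ≠ 0) (h : (adjT p q r).mulVec x = t • x) :
    (treePoly (p - 1) (q - 1) (r - 1)).eval t = 0 := by
  obtain ⟨hcenter, h₁, h₂, h₃⟩ := (adjT_mulVec_eq_smul_iff_eval_S x t).1 h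
  set e₁ := firstArm x (p - 1)
  set e₂ := secondArm x (q - 1)
  set e₃ := thirdArm x (r - 1)
  have c₁ : x none = (S ℝ ↑(p - 1)).eval t * e₁ := by simpa using h₁ 0 (by omega)
  have c₂ : x none = (S ℝ ↑(q - 1)).eval t * e₂ := by simpa using h₂ 0 (by omega)
  have c₃ : x none = (S ℝ ↑(r - 1)).eval t * e₃ := by simpa using h₃ 0 (by omega)
  have n₁ : firstArm x 1 = (S ℝ (↑(p - 1) - 1)).eval t * e₁ := by simpa using h₁ 1 (by omega)
  have n₂ : secondArm x 1 = (S ℝ (↑(q - 1) - 1)).eval t * e₂ := by simpa using h₂ 1 (by omega)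
  have n₃ : thirdArm x 1 = (S ℝ (↑(r - 1) - 1)).eval t * e₃ := by simpa using h₃ 1 (by omega)
  rw [n₁, n₂, n₃] at hcenter
  set a := (S ℝ ↑(p - 1)).eval t
  set b := (S ℝ ↑(q - 1)).eval t
  set c := (S ℝ ↑(r - 1)).eval t
  set a' := (S ℝ (↑(p - 1) - 1)).eval t
  set b' := (S ℝ (↑(q - 1) - 1)).eval t
  set c' := (S ℝ (↑(r - 1) - 1)).eval t
  have hpoly : (treePoly (p - 1) (q - 1) (r - 1)).eval t =
      t * a * b * c - a' * b * c - a * b' * c - a * b * c' := by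
    simp [treePoly, a, b, c, a', b', c']
  by_contra hne
  rw [hpoly] at hne
  -- the polynomial kills each end value `eᵢ`, and every entry of `x` is a multiple of one of them
  have he₁ : e₁ = 0 := (mul_eq_zero.1 (by linear_combination b * c * hcenter +
    (-t * b * c + b' * c + b * c') * c₁ - b' * c * c₂ - b * c' * c₃)).resolve_left hne
  have he₂ : e₂ = 0 := (mul_eq_zero.1 (by linear_combination a * c * hcenter +
    (-t * a * c + a' * c + a * c') * c₂ - a' * c * c₁ - a * c' * c₃)).resolve_left hne
  have he₃ : e₃ = 0 := (mul_eq_zero.1 (by linear_combination a * b * hcenter +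
    (-t * a * b + a' * b + a * b') * c₃ - a' * b * c₁ - a * b' * c₂)).resolve_left hne
  refine hx (funext fun v => ?_)
  rcases v with _ | ⟨⟨n, hn⟩⟩ | ⟨⟨n, hn⟩⟩ | ⟨⟨n, hn⟩⟩
  · simp [c₁, he₁]
  · simpa [firstArm, armExt, hn, he₁] using h₁ (n + 1) (by omega)
  · simpa [secondArm, armExt, hn, he₂] using h₂ (n + 1) (by omega)
  · simpa [thirdArm, armExt, hn, he₃] using h₃ (n + 1) (by omega)

/-- The end value of each arm is the product of the `S`-values of the other two arms. -/
noncomputable def treeVector (p q r : ℕ) (t : ℝ) : TVertex p q r → ℝ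
  | none => (S ℝ ↑(p - 1)).eval t * (S ℝ ↑(q - 1)).eval t * (S ℝ ↑(r - 1)).eval t
  | some (.inl i) =>
      (S ℝ (↑(p - 1) - (i + 1))).eval t * (S ℝ ↑(q - 1)).eval t * (S ℝ ↑(r - 1)).eval t
  | some (.inr (.inl i)) =>
      (S ℝ ↑(p - 1)).eval t * (S ℝ (↑(q - 1) - (i + 1))).eval t * (S ℝ ↑(r - 1)).eval t
  | some (.inr (.inr i)) =>
      (S ℝ ↑(p - 1)).eval t * (S ℝ ↑(q - 1)).eval t * (S ℝ (↑(r - 1) - (i + 1))).eval t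

section TreeVector

variable {p q r : ℕ} {t : ℝ}

theorem firstArm_treeVector {n : ℕ} (hn : n ≤ p - 1 + 1) : firstArm (treeVector p q r t) n =
    (S ℝ (↑(p - 1) - n)).eval t * ((S ℝ ↑(q - 1)).eval t * (S ℝ ↑(r - 1)).eval t) := by
  rcases n with _ | n
  · simp [treeVector, mul_assoc]
  · by_cases h : n < p - 1
    · simp [firstArm, armExt, h, treeVector, mul_assoc]
    · obtain rfl : n = p - 1 := by omega
      simp [firstArm, armExt, S_neg_one]

theorem secondArm_treeVector {n : ℕ} (hn : n ≤ q - 1 + 1) : secondArm (treeVector p q r t) n =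
    (S ℝ (↑(q - 1) - n)).eval t * ((S ℝ ↑(p - 1)).eval t * (S ℝ ↑(r - 1)).eval t) := by
  rcases n with _ | n
  · simp only [secondArm_zero, treeVector, CharP.cast_eq_zero, sub_zero]
    ring
  · by_cases h : n < q - 1
    · simp only [secondArm, armExt, h, ↓reduceDIte, treeVector, Nat.cast_add, Nat.cast_one]
      ring
    · obtain rfl : n = q - 1 := by omega
      simp [secondArm, armExt, S_neg_one]

theorem thirdArm_treeVector {n : ℕ} (hn : n ≤ r - 1 + 1) : thirdArm (treeVector p q r t) n =
    (S ℝ (↑(r - 1) - n)).eval t * ((S ℝ ↑(p - 1)).eval t * (S ℝ ↑(q - 1)).eval t) := by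
  rcases n with _ | n
  · simp only [thirdArm_zero, treeVector, CharP.cast_eq_zero, sub_zero]
    ring
  · by_cases h : n < r - 1
    · simp only [thirdArm, armExt, h, ↓reduceDIte, treeVector, Nat.cast_add, Nat.cast_one]
      ring
    · obtain rfl : n = r - 1 := by omega
      simp [thirdArm, armExt, S_neg_one]

theorem adjT_mulVec_treeVector (h : (treePoly (p - 1) (q - 1) (r - 1)).eval t = 0) :
    (adjT p q r).mulVec (treeVector p q r t) = t • treeVector p q r t := by
  refine (adjT_mulVec_eq_smul_iff_eval_S _ t).2
    ⟨?_, fun n hn => ?_, fun n hn => ?_, fun n hn => ?_⟩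
  · rw [firstArm_treeVector (by omega), secondArm_treeVector (by omega),
      thirdArm_treeVector (by omega)]
    simp only [treePoly, eval_sub, eval_mul, eval_X] at h
    push_cast
    simp only [treeVector]
    linear_combination h
  · rw [firstArm_treeVector hn, firstArm_treeVector (by omega)]
    simp
  · rw [secondArm_treeVector hn, secondArm_treeVector (by omega)]
    simp
  · rw [thirdArm_treeVector hn, thirdArm_treeVector (by omega)]
    simp

theorem treeVector_none_pos (ht : 2 ≤ t) : 0 < treeVector p q r t none := by
  have hS (n : ℕ) : 0 < (S ℝ n).eval t := zero_lt_one.trans_le (one_le_eval_S ht n)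
  exact mul_pos (mul_pos (hS _) (hS _)) (hS _)

end TreeVector

theorem exists_mulVec_eq_smul_of_eval_treePoly_eq_zero {p q r : ℕ} {t : ℝ} (ht : 2 ≤ t)
    (h : (treePoly (p - 1) (q - 1) (r - 1)).eval t = 0) :
    ∃ x : TVertex p q r → ℝ, x ≠ 0 ∧ (adjT p q r).mulVec x = t • x :=
  ⟨treeVector p q r t, fun h0 => (treeVector_none_pos ht).ne' (congrFun h0 none),
    adjT_mulVec_treeVector h⟩

theorem add_inv_lt_add_inv {x y : ℝ} (hx : 1 ≤ x) (hxy : x < y) : x + x⁻¹ < y + y⁻¹ := by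
  have hlog : |Real.log x| < |Real.log y| := by
    rw [abs_of_nonneg (Real.log_nonneg hx), abs_of_nonneg (Real.log_nonneg (hx.trans hxy.le))]
    exact Real.log_lt_log (by linarith) hxy
  have := Real.cosh_lt_cosh.2 hlog
  rw [Real.cosh_log (by linarith), Real.cosh_log (by linarith)] at this
  linarith

theorem le_of_add_inv_le_add_inv {x y : ℝ} (hy : 1 ≤ y) (h : x + x⁻¹ ≤ y + y⁻¹) : x ≤ y :=
  not_lt.1 fun hlt => (add_inv_lt_add_inv hy hlt).not_ge h

theorem eval_treePoly_one_two_six (t : ℝ) :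
    (treePoly 1 2 6).eval t = t ^ 10 - 9 * t ^ 8 + 27 * t ^ 6 - 31 * t ^ 4 + 12 * t ^ 2 - 1 := by
  norm_num [treePoly, S_eq ℝ 6, S_eq ℝ 5, S_eq ℝ 4, S_eq ℝ 3, S_two]
  ring

theorem lehmerPoly_eq_pow_mul_eval_treePoly {m t : ℝ} (hm : m ≠ 0) (h : m + m⁻¹ + 2 = t ^ 2) :
    lehmerPoly m = m ^ 5 * (treePoly 1 2 6).eval t := by
  have ht : t ^ 10 - 9 * t ^ 8 + 27 * t ^ 6 - 31 * t ^ 4 + 12 * t ^ 2 - 1 =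
      (t ^ 2) ^ 5 - 9 * (t ^ 2) ^ 4 + 27 * (t ^ 2) ^ 3 - 31 * (t ^ 2) ^ 2 + 12 * t ^ 2 - 1 := by
    ring
  rw [eval_treePoly_one_two_six, ht, ← h, lehmerPoly]
  field_simp
  ring

theorem exists_two_lt_eval_treePoly_one_two_six_eq_zero :
    ∃ t, 2 < t ∧ (treePoly 1 2 6).eval t = 0 := by
  have h2 : (treePoly 1 2 6).eval 2 = -1 := by norm_num [treePoly, S_eval_two]
  obtain ⟨t, ht, hroot⟩ : (0 : ℝ) ∈ (fun t => (treePoly 1 2 6).eval t) '' Set.Icc 2 3 :=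
    intermediate_value_Icc (by norm_num) (treePoly 1 2 6).continuous.continuousOn
      ⟨by rw [h2]; norm_num, by norm_num [eval_treePoly_one_two_six]⟩
  refine ⟨t, lt_of_le_of_ne ht.1 ?_, hroot⟩
  rintro rfl
  norm_num [h2] at hroot

theorem exists_two_lt_mulVec_eq_smul_two_three_seven :
    ∃ t : ℝ, 2 < t ∧ ∃ x : TVertex 2 3 7 → ℝ, x ≠ 0 ∧ (adjT 2 3 7).mulVec x = t • x := by
  obtain ⟨t, ht, hroot⟩ := exists_two_lt_eval_treePoly_one_two_six_eq_zero
  exact ⟨t, ht, exists_mulVec_eq_smul_of_eval_treePoly_eq_zero ht.le hroot⟩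

theorem two_lt_muT_two_three_seven : 2 < muT 2 3 7 := by
  obtain ⟨t, ht, x, hx, h⟩ := exists_two_lt_mulVec_eq_smul_two_three_seven
  exact ht.trans_le (le_muT hx h)

theorem eval_treePoly_muT_two_three_seven : (treePoly 1 2 6).eval (muT 2 3 7) = 0 := by
  obtain ⟨t, -, hex⟩ := exists_two_lt_mulVec_eq_smul_two_three_seven
  obtain ⟨x, hx, h⟩ := exists_mulVec_eq_muT_smul ⟨t, hex⟩
  simpa using eval_treePoly_eq_zero_of_mulVec_eq_smul hx h

theorem add_inv_add_two_le_muT_sq {y : ℝ} (hy : 1 < y) (hroot : lehmerPoly y = 0) :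
    y + y⁻¹ + 2 ≤ muT 2 3 7 ^ 2 := by
  have hy2 : 2 < y + y⁻¹ := by
    simpa [one_add_one_eq_two] using add_inv_lt_add_inv le_rfl hy
  have ht : y + y⁻¹ + 2 = √(y + y⁻¹ + 2) ^ 2 := (Real.sq_sqrt (by linarith)).symm
  have ht2 : 2 < √(y + y⁻¹ + 2) := (Real.lt_sqrt (by norm_num)).2 (by linarith)
  have htroot : (treePoly 1 2 6).eval √(y + y⁻¹ + 2) = 0 := by
    have := lehmerPoly_eq_pow_mul_eval_treePoly (by positivity) ht
    rw [hroot] at this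
    exact (mul_eq_zero.1 this.symm).resolve_left (by positivity)
  obtain ⟨x, hx, h⟩ :=
    exists_mulVec_eq_smul_of_eval_treePoly_eq_zero (p := 2) (q := 3) (r := 7) ht2.le htroot
  rw [ht]
  exact pow_le_pow_left₀ (by positivity) (le_muT hx h) 2

/-- If `μ = μ(2,3,7)` then `μ > 2` and the unique `m > 1` with
`m + m⁻¹ + 2 = μ²` is the largest real root of Lehmer's polynomial,
i.e. `m` is Lehmer's number. -/
theorem muT_237_gives_lehmer_number :
    2 < muT 2 3 7 ∧
    ∀ m : ℝ, 1 < m → m + m⁻¹ + 2 = (muT 2 3 7) ^ 2 →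
      lehmerPoly m = 0 ∧ ∀ x : ℝ, lehmerPoly x = 0 → x ≤ m := by
  refine ⟨two_lt_muT_two_three_seven, fun m hm hmμ => ⟨?_, fun x hx => ?_⟩⟩
  · rw [lehmerPoly_eq_pow_mul_eval_treePoly (by positivity) hmμ,
      eval_treePoly_muT_two_three_seven, mul_zero]
  · rcases le_or_gt x 1 with hx1 | hx1
    · linarith
    · exact le_of_add_inv_le_add_inv hm.le (by linarith [add_inv_add_two_le_muT_sq hx1 hx])
end
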